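/- Let L>0, Ω=(0,L)×(-1,1), and κ,ν>0. Let w=(w₁,w₂) be a smooth Ω-periodic, divergence-free, symmetric vector field and let ξ be a smooth Ω-periodic scalar function. Then |∫_Ω ξ(x) Δw₂(x) dx| ≤ (κ/20)‖∇ξ‖² + (ν/20)‖Δw₂‖² + (125/(νκ²))‖∇w₁‖². -/

import Mathlib

open MeasureTheory Real Filter

noncomputable section

/-- First partial derivative. -/
def d1 (f : ℝ × ℝ → ℝ) (p : ℝ × ℝ) : ℝ := fderiv ℝ f p (1, 0)

/-- Second partial derivative. -/
def d2 (f : ℝ × ℝ → ℝ) (p : ℝ × ℝ) : ℝ := fderiv ℝ f p (0, 1)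

/-- Laplacian. -/
def lap (f : ℝ × ℝ → ℝ) (p : ℝ × ℝ) : ℝ := d1 (d1 f) p + d2 (d2 f) p

/-- The domain Ω = (0,L) × (-1,1). -/
def Omg (L : ℝ) : Set (ℝ × ℝ) := Set.Ioo 0 L ×ˢ Set.Ioo (-1) 1

/-- Squared L² norm over Ω. -/
def nrmSq (L : ℝ) (f : ℝ × ℝ → ℝ) : ℝ := ∫ p in Omg L, (f p) ^ 2

/-- L² norm over Ω. -/
def nrm (L : ℝ) (f : ℝ × ℝ → ℝ) : ℝ := Real.sqrt (nrmSq L f)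

/-- Squared L² norm of the gradient over Ω. -/
def gradNrmSq (L : ℝ) (f : ℝ × ℝ → ℝ) : ℝ := ∫ p in Omg L, ((d1 f p) ^ 2 + (d2 f p) ^ 2)

/-- L² norm of the gradient over Ω. -/
def gradNrm (L : ℝ) (f : ℝ × ℝ → ℝ) : ℝ := Real.sqrt (gradNrmSq L f)

/-- Squared L² norm of the Laplacian over Ω. -/
def lapNrmSq (L : ℝ) (f : ℝ × ℝ → ℝ) : ℝ := ∫ p in Omg L, (lap f p) ^ 2

/-- L² norm of the Laplacian over Ω. -/
def lapNrm (L : ℝ) (f : ℝ × ℝ → ℝ) : ℝ := Real.sqrt (lapNrmSq L f)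

/-- Ω-periodic: L-periodic in x₁ and 2-periodic in x₂. -/
def OmgPeriodic (L : ℝ) (f : ℝ × ℝ → ℝ) : Prop :=
  (∀ x y : ℝ, f (x + L, y) = f (x, y)) ∧ (∀ x y : ℝ, f (x, y + 2) = f (x, y))

/-- Divergence-free vector field. -/
def DivFree (u₁ u₂ : ℝ × ℝ → ℝ) : Prop := ∀ p, d1 u₁ p + d2 u₂ p = 0

/-- Symmetric vector field: first component even in x₂, second odd in x₂. -/
def Symm (u₁ u₂ : ℝ × ℝ → ℝ) : Prop :=
  (∀ x y : ℝ, u₁ (x, -y) = u₁ (x, y)) ∧ (∀ x y : ℝ, u₂ (x, -y) = -u₂ (x, y))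


/-!
Integrating by parts, `∫ ξ Δw₂ = -∫ ∇ξ·∇w₂` and `‖∇w₂‖² = -∫ w₂ Δw₂`, so Cauchy–Schwarz gives
`|∫ ξ Δw₂|⁴ ≤ ‖∇ξ‖⁴ ‖∇w₂‖⁴ ≤ ‖∇ξ‖⁴ ‖w₂‖² ‖Δw₂‖²`. Symmetry makes `w₂` odd in `x₂`, hence zero on
`x₂ = 0`; writing `w₂(x₁, x₂) = ∫₀^{x₂} ∂₂w₂` gives `w₂(x₁, x₂)² ≤ |x₂| ∫₋₁¹ (∂₂w₂)² dx₂`, and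
`∫₋₁¹ |x₂| = 1` turns this into the Poincaré inequality `‖w₂‖ ≤ ‖∂₂w₂‖`. Incompressibility turns `∂₂w₂` into `-∂₁w₁`. The AM–GM inequality `I ≤ a + r + s` for
`I⁴ ≤ 64 a² r s` finishes, the constants satisfying `64 (κ/20)² (ν/20) (125/(νκ²)) = 1`.
-/

open Set

section CauchySchwarz

variable {α : Type*} [MeasurableSpace α] {μ : Measure α}

theorem sq_integral_le_mul_of_quadratic_nonneg {F G H : α → ℝ} (hF : Integrable F μ)
    (hG : Integrable G μ) (hH : Integrable H μ)
    (hquad : ∀ t a, 0 ≤ t ^ 2 * F a + 2 * t * H a + G a) :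
    (∫ a, H a ∂μ) ^ 2 ≤ (∫ a, F a ∂μ) * ∫ a, G a ∂μ := by
  have hint (t : ℝ) :
      0 ≤ (∫ a, F a ∂μ) * (t * t) + 2 * (∫ a, H a ∂μ) * t + ∫ a, G a ∂μ := by
    have h : 0 ≤ ∫ a, (t ^ 2 * F a + 2 * t * H a + G a) ∂μ := integral_nonneg (hquad t)
    rw [integral_add (f := fun a => t ^ 2 * F a + 2 * t * H a)
        ((hF.const_mul _).add (hH.const_mul _)) hG,
      integral_add (hF.const_mul _) (hH.const_mul _), integral_const_mul,
      integral_const_mul] at h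
    linarith
  have h := discrim_le_zero hint
  rw [discrim] at h
  linarith

theorem sq_integral_mul_le {φ ψ : α → ℝ} (hφ : Integrable (fun a => φ a ^ 2) μ)
    (hψ : Integrable (fun a => ψ a ^ 2) μ) (hφψ : Integrable (fun a => φ a * ψ a) μ) :
    (∫ a, φ a * ψ a ∂μ) ^ 2 ≤ (∫ a, φ a ^ 2 ∂μ) * ∫ a, ψ a ^ 2 ∂μ :=
  sq_integral_le_mul_of_quadratic_nonneg hφ hψ hφψ fun t a => by
    nlinarith [sq_nonneg (t * φ a + ψ a)]

end CauchySchwarz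

theorem le_add_add_of_pow_four_le {I a r s : ℝ} (ha : 0 ≤ a) (hr : 0 ≤ r)
    (hs : 0 ≤ s) (h : I ^ 4 ≤ 64 * a ^ 2 * r * s) : I ≤ a + r + s := by
  have hrs : 4 * r * s ≤ (r + s) ^ 2 := by nlinarith [sq_nonneg (r - s)]
  have hars : 4 * a * (r + s) ≤ (a + r + s) ^ 2 := by nlinarith [sq_nonneg (a - (r + s))]
  have : I ^ 4 ≤ (a + r + s) ^ 4 :=
    calc I ^ 4 ≤ 16 * a ^ 2 * (4 * r * s) := by linarith
      _ ≤ 16 * a ^ 2 * (r + s) ^ 2 := by gcongr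
      _ = (4 * a * (r + s)) ^ 2 := by ring
      _ ≤ ((a + r + s) ^ 2) ^ 2 := by gcongr
      _ = (a + r + s) ^ 4 := by ring
  exact le_of_pow_le_pow_left₀ four_ne_zero (by positivity) this

section Poincare

theorem integral_Ioo_abs : ∫ y in Ioo (-1 : ℝ) 1, |y| = 1 := by
  have hpos : ∫ y in (0 : ℝ)..1, |y| = 1 / 2 := by
    rw [intervalIntegral.integral_congr (g := fun y => y) fun y hy => abs_of_nonneg (by
      simp only [zero_le_one, uIcc_of_le, mem_Icc] at hy; exact hy.1)]
    norm_num
  have hneg : ∫ y in (-1 : ℝ)..0, |y| = 1 / 2 := by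
    have h := intervalIntegral.integral_comp_neg (a := 0) (b := 1) (fun y : ℝ => |y|)
    simp only [abs_neg, neg_zero] at h
    rw [← h, hpos]
  rw [← integral_Ioc_eq_integral_Ioo, ← intervalIntegral.integral_of_le (by norm_num),
    ← intervalIntegral.integral_add_adjacent_intervals (b := 0)
      (continuous_abs.intervalIntegrable _ _) (continuous_abs.intervalIntegrable _ _), hneg, hpos]
  norm_num

variable {φ φ' : ℝ → ℝ}

theorem sq_le_abs_mul_integral_deriv_sq (hφ : ∀ t, HasDerivAt φ (φ' t) t) (hφ' : Continuous φ')
    (h0 : φ 0 = 0) {y : ℝ} (hy : y ∈ Ioo (-1 : ℝ) 1) :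
    φ y ^ 2 ≤ |y| * ∫ t in Ioo (-1 : ℝ) 1, φ' t ^ 2 := by
  have hsub : uIoc 0 y ⊆ Ioo (-1 : ℝ) 1 := fun t ht => by
    rcases mem_uIoc.1 ht with h | h <;> constructor <;> linarith [hy.1, hy.2]
  have hftc : φ y = ∫ t in (0 : ℝ)..y, φ' t := by
    rw [intervalIntegral.integral_eq_sub_of_hasDerivAt (fun t _ => hφ t)
      (hφ'.intervalIntegrable _ _), h0, sub_zero]
  have hcs := sq_integral_mul_le (μ := volume.restrict (uIoc 0 y)) (φ := fun _ => 1) (ψ := φ')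
    (Continuous.integrableOn_uIoc (by fun_prop)) (hφ'.pow 2).integrableOn_uIoc
    (Continuous.integrableOn_uIoc (by fun_prop))
  have hlength : ∫ _ in uIoc 0 y, (1 : ℝ) = |y| := by simp [Measure.real, Real.volume_uIoc]
  simp only [one_mul, one_pow, hlength] at hcs
  calc φ y ^ 2 = (∫ t in uIoc 0 y, φ' t) ^ 2 := by
        rw [hftc, ← sq_abs, intervalIntegral.abs_integral_eq_abs_integral_uIoc, sq_abs]
    _ ≤ |y| * ∫ t in uIoc 0 y, φ' t ^ 2 := hcs
    _ ≤ |y| * ∫ t in Ioo (-1 : ℝ) 1, φ' t ^ 2 :=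
        mul_le_mul_of_nonneg_left (setIntegral_mono_set
          ((hφ'.pow 2).integrableOn_Icc.mono_set Ioo_subset_Icc_self)
          (.of_forall fun t => sq_nonneg _) hsub.eventuallyLE) (abs_nonneg y)

theorem integral_sq_le_integral_deriv_sq (hφ : ∀ t, HasDerivAt φ (φ' t) t)
    (hφ' : Continuous φ') (h0 : φ 0 = 0) :
    ∫ t in Ioo (-1 : ℝ) 1, φ t ^ 2 ≤ ∫ t in Ioo (-1 : ℝ) 1, φ' t ^ 2 := by
  have hφc : Continuous φ := continuous_iff_continuousAt.2 fun t => (hφ t).continuousAt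
  calc ∫ t in Ioo (-1 : ℝ) 1, φ t ^ 2
      ≤ ∫ t in Ioo (-1 : ℝ) 1, |t| * ∫ s in Ioo (-1 : ℝ) 1, φ' s ^ 2 :=
        setIntegral_mono_on ((hφc.pow 2).integrableOn_Icc.mono_set Ioo_subset_Icc_self)
          ((continuous_abs.mul continuous_const).integrableOn_Icc.mono_set Ioo_subset_Icc_self)
          measurableSet_Ioo fun t ht => sq_le_abs_mul_integral_deriv_sq hφ hφ' h0 ht
    _ = ∫ t in Ioo (-1 : ℝ) 1, φ' t ^ 2 := by rw [integral_mul_const, integral_Ioo_abs, one_mul]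

end Poincare

variable {f g : ℝ × ℝ → ℝ} {L : ℝ}

theorem contDiff_d1 {n : WithTop ℕ∞} (hf : ContDiff ℝ (n + 1) f) : ContDiff ℝ n (d1 f) :=
  (hf.fderiv_right le_rfl).clm_apply contDiff_const

theorem contDiff_d2 {n : WithTop ℕ∞} (hf : ContDiff ℝ (n + 1) f) : ContDiff ℝ n (d2 f) :=
  (hf.fderiv_right le_rfl).clm_apply contDiff_const

@[fun_prop]
theorem continuous_d1 (hf : ContDiff ℝ 1 f) : Continuous (d1 f) :=
  (contDiff_d1 (n := 0) (by simpa using hf)).continuous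

@[fun_prop]
theorem continuous_d2 (hf : ContDiff ℝ 1 f) : Continuous (d2 f) :=
  (contDiff_d2 (n := 0) (by simpa using hf)).continuous

theorem hasDerivAt_d1 (hf : Differentiable ℝ f) (x y : ℝ) :
    HasDerivAt (fun t => f (t, y)) (d1 f (x, y)) x :=
  (hf (x, y)).hasFDerivAt.comp_hasDerivAt x ((hasDerivAt_id x).prodMk (hasDerivAt_const x y))

theorem hasDerivAt_d2 (hf : Differentiable ℝ f) (x y : ℝ) :
    HasDerivAt (fun t => f (x, t)) (d2 f (x, y)) y :=
  (hf (x, y)).hasFDerivAt.comp_hasDerivAt y ((hasDerivAt_const y x).prodMk (hasDerivAt_id y))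

theorem d1_mul (hf : Differentiable ℝ f) (hg : Differentiable ℝ g) (p : ℝ × ℝ) :
    d1 (fun q => f q * g q) p = f p * d1 g p + d1 f p * g p := by
  simp [d1, fderiv_fun_mul (hf p) (hg p), mul_comm]

theorem d2_mul (hf : Differentiable ℝ f) (hg : Differentiable ℝ g) (p : ℝ × ℝ) :
    d2 (fun q => f q * g q) p = f p * d2 g p + d2 f p * g p := by
  simp [d2, fderiv_fun_mul (hf p) (hg p), mul_comm]

theorem omgPeriodic_fderiv_apply (hf : OmgPeriodic L f) (v : ℝ × ℝ) :
    OmgPeriodic L (fun p => fderiv ℝ f p v) := by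
  have shift (c : ℝ × ℝ) (hc : ∀ p, f (p + c) = f p) (p : ℝ × ℝ) :
      fderiv ℝ f (p + c) v = fderiv ℝ f p v := by
    rw [← fderiv_comp_add_right, funext hc]
  exact ⟨fun x y => by simpa using shift (L, 0) (fun ⟨a, b⟩ => by simpa using hf.1 a b) (x, y),
    fun x y => by simpa using shift (0, 2) (fun ⟨a, b⟩ => by simpa using hf.2 a b) (x, y)⟩

theorem omgPeriodic_d1 (hf : OmgPeriodic L f) : OmgPeriodic L (d1 f) :=
  omgPeriodic_fderiv_apply hf _

theorem omgPeriodic_d2 (hf : OmgPeriodic L f) : OmgPeriodic L (d2 f) :=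
  omgPeriodic_fderiv_apply hf _

theorem OmgPeriodic.mul (hf : OmgPeriodic L f) (hg : OmgPeriodic L g) :
    OmgPeriodic L (fun p => f p * g p) :=
  ⟨fun x y => by simp only [hf.1, hg.1], fun x y => by simp only [hf.2, hg.2]⟩

theorem measurableSet_Omg (L : ℝ) : MeasurableSet (Omg L) :=
  measurableSet_Ioo.prod measurableSet_Ioo

theorem Continuous.integrableOn_Omg (hf : Continuous f) (L : ℝ) : IntegrableOn f (Omg L) :=
  (hf.continuousOn.integrableOn_compact (isCompact_Icc.prod isCompact_Icc)).mono_set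
    (prod_mono Ioo_subset_Icc_self Ioo_subset_Icc_self)

theorem Continuous.integrable_Omg_prod (hf : Continuous f) (L : ℝ) :
    Integrable f ((volume.restrict (Ioo 0 L)).prod (volume.restrict (Ioo (-1 : ℝ) 1))) := by
  rw [Measure.prod_restrict, ← Measure.volume_eq_prod]
  exact hf.integrableOn_Omg L

theorem setIntegral_Omg (hf : Continuous f) :
    ∫ p in Omg L, f p = ∫ x in Ioo 0 L, ∫ y in Ioo (-1 : ℝ) 1, f (x, y) := by
  rw [Omg, Measure.volume_eq_prod, ← Measure.prod_restrict]
  exact integral_prod f (hf.integrable_Omg_prod L)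

theorem setIntegral_Omg_symm (hf : Continuous f) :
    ∫ p in Omg L, f p = ∫ y in Ioo (-1 : ℝ) 1, ∫ x in Ioo 0 L, f (x, y) :=
  (setIntegral_Omg hf).trans (integral_integral_swap (hf.integrable_Omg_prod L))

theorem setIntegral_Omg_d1_eq_zero (hf : ContDiff ℝ 1 f) (hp : OmgPeriodic L f) :
    ∫ p in Omg L, d1 f p = 0 := by
  rcases le_total L 0 with hL | hL
  · simp [Omg, Ioo_eq_empty_of_le hL]
  have hline (y : ℝ) : ∫ x in Ioo 0 L, d1 f (x, y) = 0 := by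
    rw [← integral_Ioc_eq_integral_Ioo, ← intervalIntegral.integral_of_le hL,
      intervalIntegral.integral_eq_sub_of_hasDerivAt
        (fun x _ => hasDerivAt_d1 (hf.differentiable one_ne_zero) x y)
        (((continuous_d1 hf).comp (by fun_prop)).intervalIntegrable _ _),
      ← zero_add L, hp.1, sub_self]
  simp [setIntegral_Omg_symm (continuous_d1 hf), hline]

theorem setIntegral_Omg_d2_eq_zero (hf : ContDiff ℝ 1 f) (hp : OmgPeriodic L f) :
    ∫ p in Omg L, d2 f p = 0 := by
  have hline (x : ℝ) : ∫ y in Ioo (-1 : ℝ) 1, d2 f (x, y) = 0 := by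
    rw [← integral_Ioc_eq_integral_Ioo, ← intervalIntegral.integral_of_le (by norm_num),
      intervalIntegral.integral_eq_sub_of_hasDerivAt
        (fun y _ => hasDerivAt_d2 (hf.differentiable one_ne_zero) x y)
        (((continuous_d2 hf).comp (by fun_prop)).intervalIntegrable _ _),
      sub_eq_zero]
    simpa [show (-1 : ℝ) + 2 = 1 by norm_num] using hp.2 x (-1)
  simp [setIntegral_Omg (continuous_d2 hf), hline]

theorem setIntegral_Omg_mul_d1 (hf : ContDiff ℝ 1 f) (hg : ContDiff ℝ 1 g)
    (hpf : OmgPeriodic L f) (hpg : OmgPeriodic L g) :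
    ∫ p in Omg L, f p * d1 g p = -∫ p in Omg L, d1 f p * g p := by
  have h := setIntegral_Omg_d1_eq_zero (hf.mul hg) (hpf.mul hpg)
  rw [setIntegral_congr_fun (measurableSet_Omg L)
      (fun p _ => d1_mul (hf.differentiable one_ne_zero) (hg.differentiable one_ne_zero) p),
    integral_add] at h
  · linarith
  all_goals exact Continuous.integrableOn_Omg (by fun_prop) L

theorem setIntegral_Omg_mul_d2 (hf : ContDiff ℝ 1 f) (hg : ContDiff ℝ 1 g)
    (hpf : OmgPeriodic L f) (hpg : OmgPeriodic L g) :
    ∫ p in Omg L, f p * d2 g p = -∫ p in Omg L, d2 f p * g p := by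
  have h := setIntegral_Omg_d2_eq_zero (hf.mul hg) (hpf.mul hpg)
  rw [setIntegral_congr_fun (measurableSet_Omg L)
      (fun p _ => d2_mul (hf.differentiable one_ne_zero) (hg.differentiable one_ne_zero) p),
    integral_add] at h
  · linarith
  all_goals exact Continuous.integrableOn_Omg (by fun_prop) L

theorem setIntegral_Omg_mul_lap (hf : ContDiff ℝ 1 f) (hg : ContDiff ℝ 2 g)
    (hpf : OmgPeriodic L f) (hpg : OmgPeriodic L g) :
    ∫ p in Omg L, f p * lap g p = -∫ p in Omg L, (d1 f p * d1 g p + d2 f p * d2 g p) := by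
  have hg₁ : ContDiff ℝ 1 (d1 g) := contDiff_d1 hg
  have hg₂ : ContDiff ℝ 1 (d2 g) := contDiff_d2 hg
  simp only [lap, mul_add]
  rw [integral_add, integral_add, setIntegral_Omg_mul_d1 hf hg₁ hpf (omgPeriodic_d1 hpg),
    setIntegral_Omg_mul_d2 hf hg₂ hpf (omgPeriodic_d2 hpg)]
  · ring
  all_goals exact Continuous.integrableOn_Omg (by fun_prop) L

theorem gradNrmSq_nonneg (L : ℝ) (f : ℝ × ℝ → ℝ) : 0 ≤ gradNrmSq L f :=
  setIntegral_nonneg (measurableSet_Omg L) fun _ _ => by positivity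

theorem lapNrmSq_nonneg (L : ℝ) (f : ℝ × ℝ → ℝ) : 0 ≤ lapNrmSq L f :=
  setIntegral_nonneg (measurableSet_Omg L) fun _ _ => sq_nonneg _

theorem sq_setIntegral_Omg_grad_inner_le (hf : ContDiff ℝ 1 f) (hg : ContDiff ℝ 1 g) :
    (∫ p in Omg L, (d1 f p * d1 g p + d2 f p * d2 g p)) ^ 2
      ≤ gradNrmSq L f * gradNrmSq L g :=
  sq_integral_le_mul_of_quadratic_nonneg (Continuous.integrableOn_Omg (by fun_prop) L)
    (Continuous.integrableOn_Omg (by fun_prop) L) (Continuous.integrableOn_Omg (by fun_prop) L)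
    fun t p => by nlinarith [sq_nonneg (t * d1 f p + d1 g p), sq_nonneg (t * d2 f p + d2 g p)]

theorem sq_gradNrmSq_le_nrmSq_mul_lapNrmSq (hf : ContDiff ℝ 2 f) (hp : OmgPeriodic L f) :
    gradNrmSq L f ^ 2 ≤ nrmSq L f * lapNrmSq L f := by
  have hlap : Continuous (lap f) := by
    have : ContDiff ℝ 1 (d1 f) := contDiff_d1 hf
    have : ContDiff ℝ 1 (d2 f) := contDiff_d2 hf
    unfold lap; fun_prop
  have hf₁ : ContDiff ℝ 1 f := hf.of_le one_le_two
  have hgreen : gradNrmSq L f = -∫ p in Omg L, f p * lap f p := by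
    simp only [setIntegral_Omg_mul_lap hf₁ hf hp hp, neg_neg, gradNrmSq, sq]
  rw [hgreen, neg_sq]
  exact sq_integral_mul_le (Continuous.integrableOn_Omg (by fun_prop) L)
    (Continuous.integrableOn_Omg (by fun_prop) L) (Continuous.integrableOn_Omg (by fun_prop) L)

theorem nrmSq_le_setIntegral_d2_sq_of_odd (hf : ContDiff ℝ 1 f)
    (hodd : ∀ x y : ℝ, f (x, -y) = -f (x, y)) :
    nrmSq L f ≤ ∫ p in Omg L, d2 f p ^ 2 := by
  have hf₀ : Continuous fun p => f p ^ 2 := by fun_prop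
  have hd₀ : Continuous fun p => d2 f p ^ 2 := by fun_prop
  rw [nrmSq, setIntegral_Omg hf₀, setIntegral_Omg hd₀]
  refine setIntegral_mono_on (hf₀.integrable_Omg_prod L).integral_prod_left
    (hd₀.integrable_Omg_prod L).integral_prod_left measurableSet_Ioo fun x _ => ?_
  refine integral_sq_le_integral_deriv_sq (hasDerivAt_d2 (hf.differentiable one_ne_zero) x)
    ((continuous_d2 hf).comp (by fun_prop)) (self_eq_neg.1 (by simpa using hodd x 0))

theorem nrmSq_le_gradNrmSq_of_divFree_of_symm {w₁ w₂ : ℝ × ℝ → ℝ} (hw₁ : ContDiff ℝ 1 w₁)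
    (hw₂ : ContDiff ℝ 1 w₂) (hdiv : DivFree w₁ w₂) (hsym : Symm w₁ w₂) :
    nrmSq L w₂ ≤ gradNrmSq L w₁ :=
  calc nrmSq L w₂ ≤ ∫ p in Omg L, d2 w₂ p ^ 2 := nrmSq_le_setIntegral_d2_sq_of_odd hw₂ hsym.2
    _ = ∫ p in Omg L, d1 w₁ p ^ 2 := by
        simp only [eq_neg_of_add_eq_zero_right (hdiv _), neg_sq]
    _ ≤ gradNrmSq L w₁ :=
        setIntegral_mono_on (Continuous.integrableOn_Omg (by fun_prop) L)
          (Continuous.integrableOn_Omg (by fun_prop) L) (measurableSet_Omg L)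
          fun p _ => le_add_of_nonneg_right (sq_nonneg (d2 w₁ p))

theorem abs_setIntegral_mul_lap_pow_four_le {w₁ w₂ ξ : ℝ × ℝ → ℝ} (hw₁ : ContDiff ℝ 1 w₁)
    (hw₂ : ContDiff ℝ 2 w₂) (hξ : ContDiff ℝ 1 ξ) (hpw₂ : OmgPeriodic L w₂)
    (hpξ : OmgPeriodic L ξ) (hdiv : DivFree w₁ w₂) (hsym : Symm w₁ w₂) :
    |∫ p in Omg L, ξ p * lap w₂ p| ^ 4 ≤ gradNrmSq L ξ ^ 2 * (gradNrmSq L w₁ * lapNrmSq L w₂) := by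
  have hw₂' : ContDiff ℝ 1 w₂ := hw₂.of_le one_le_two
  calc |∫ p in Omg L, ξ p * lap w₂ p| ^ 4
      = ((∫ p in Omg L, (d1 ξ p * d1 w₂ p + d2 ξ p * d2 w₂ p)) ^ 2) ^ 2 := by
        rw [setIntegral_Omg_mul_lap hξ hw₂ hpξ hpw₂, abs_neg, ← pow_mul]
        exact Even.pow_abs ⟨2, rfl⟩ _
    _ ≤ (gradNrmSq L ξ * gradNrmSq L w₂) ^ 2 := by
        gcongr; exact sq_setIntegral_Omg_grad_inner_le hξ hw₂'
    _ = gradNrmSq L ξ ^ 2 * gradNrmSq L w₂ ^ 2 := by ring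
    _ ≤ gradNrmSq L ξ ^ 2 * (nrmSq L w₂ * lapNrmSq L w₂) := by
        gcongr; exact sq_gradNrmSq_le_nrmSq_mul_lapNrmSq hw₂ hpw₂
    _ ≤ gradNrmSq L ξ ^ 2 * (gradNrmSq L w₁ * lapNrmSq L w₂) := by
        gcongr
        · exact lapNrmSq_nonneg L w₂
        · exact nrmSq_le_gradNrmSq_of_divFree_of_symm hw₁ hw₂' hdiv hsym

theorem buoyancy_laplacian_estimate_general (L : ℝ) (κ ν : ℝ) (hκ : 0 < κ) (hν : 0 < ν)
    (w₁ w₂ ξ : ℝ × ℝ → ℝ)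
    (hw₁ : ContDiff ℝ (⊤ : ℕ∞) w₁) (hw₂ : ContDiff ℝ (⊤ : ℕ∞) w₂) (hξ : ContDiff ℝ (⊤ : ℕ∞) ξ)
    (hpw₂ : OmgPeriodic L w₂) (hpξ : OmgPeriodic L ξ)
    (hdiv : DivFree w₁ w₂) (hsym : Symm w₁ w₂) :
    |∫ p in Omg L, ξ p * lap w₂ p| ≤
      κ / 20 * gradNrmSq L ξ + ν / 20 * lapNrmSq L w₂
        + 125 / (ν * κ ^ 2) * gradNrmSq L w₁ := by
  have hC2 {h : ℝ × ℝ → ℝ} (hh : ContDiff ℝ (⊤ : ℕ∞) h) : ContDiff ℝ 2 h :=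
    hh.of_le (WithTop.coe_le_coe.2 le_top)
  have hbound := abs_setIntegral_mul_lap_pow_four_le ((hC2 hw₁).of_le one_le_two) (hC2 hw₂)
    ((hC2 hξ).of_le one_le_two) hpw₂ hpξ hdiv hsym
  refine le_add_add_of_pow_four_le
    (mul_nonneg (by positivity) (gradNrmSq_nonneg L ξ))
    (mul_nonneg (by positivity) (lapNrmSq_nonneg L w₂))
    (mul_nonneg (by positivity) (gradNrmSq_nonneg L w₁)) ?_
  convert hbound using 1
  field_simp
  ring

/-- estimate (3.15) of the paper:
`|∫_Ω ξ Δw₂| ≤ (κ/20)‖∇ξ‖² + (ν/20)‖Δw₂‖² + (125/(νκ²))‖∇w₁‖²`. -/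
theorem buoyancy_laplacian_estimate (L : ℝ) (hL : 0 < L) (κ ν : ℝ) (hκ : 0 < κ) (hν : 0 < ν)
    (w₁ w₂ ξ : ℝ × ℝ → ℝ)
    (hw₁ : ContDiff ℝ (⊤ : ℕ∞) w₁) (hw₂ : ContDiff ℝ (⊤ : ℕ∞) w₂) (hξ : ContDiff ℝ (⊤ : ℕ∞) ξ)
    (hpw₁ : OmgPeriodic L w₁) (hpw₂ : OmgPeriodic L w₂) (hpξ : OmgPeriodic L ξ)
    (hdiv : DivFree w₁ w₂) (hsym : Symm w₁ w₂) :
    |∫ p in Omg L, ξ p * lap w₂ p| ≤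
      κ / 20 * gradNrmSq L ξ + ν / 20 * lapNrmSq L w₂
        + 125 / (ν * κ ^ 2) * gradNrmSq L w₁ :=
  buoyancy_laplacian_estimate_general L κ ν hκ hν w₁ w₂ ξ hw₁ hw₂ hξ hpw₂ hpξ hdiv hsym
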